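/- Suppose p ~ Dirichlet(α) with α ∈ ℝ₊^N and ᾱ = Σ_j α_j ≥ 2. Conditioned on p, Y ~ Multinomial(n, p). Then for any realization y of Y, h(p) − h(p | Y = y) ≤ N·log(1 + n), where h denotes differential entropy. -/

import Mathlib

/-- The digamma function, the logarithmic derivative of the Gamma function. -/
noncomputable def digamma (x : ℝ) : ℝ := deriv (fun y => Real.log (Real.Gamma y)) x

/-- The multivariate Beta function `B(α) = ∏ Γ(αᵢ) / Γ(∑ αᵢ)`. -/
noncomputable def multiBeta {N : ℕ} (α : Fin N → ℝ) : ℝ :=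
  (∏ i, Real.Gamma (α i)) / Real.Gamma (∑ i, α i)

/-- Differential entropy of the Dirichlet(α) distribution:
`h(p) = log B(α) + (ᾱ − N)ψ(ᾱ) − ∑ⱼ (αⱼ − 1)ψ(αⱼ)`. -/
noncomputable def dirichletEntropy {N : ℕ} (α : Fin N → ℝ) : ℝ :=
  Real.log (multiBeta α) + ((∑ i, α i) - N) * digamma (∑ i, α i)
    - ∑ j, (α j - 1) * digamma (α j)

lemma diffAt_logGamma {x : ℝ} (hx : 0 < x) :
    DifferentiableAt ℝ (fun y => Real.log (Real.Gamma y)) x := by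
  have h1 : DifferentiableAt ℝ Real.Gamma x :=
    Real.differentiableAt_Gamma (fun m => ne_of_gt (lt_of_le_of_lt (neg_nonpos.2 (Nat.cast_nonneg m)) hx))
  exact h1.log (ne_of_gt (Real.Gamma_pos_of_pos hx))

lemma slope_logGamma {x : ℝ} (hx : 0 < x) :
    slope (fun y => Real.log (Real.Gamma y)) x (x + 1) = Real.log x := by
  rw [slope_def_field]
  have : Real.Gamma (x + 1) = x * Real.Gamma x := Real.Gamma_add_one (ne_of_gt hx)
  rw [this, Real.log_mul (ne_of_gt hx) (ne_of_gt (Real.Gamma_pos_of_pos hx))]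
  field_simp
  ring

lemma digamma_le_log {x : ℝ} (hx : 0 < x) : digamma x ≤ Real.log x := by
  have h := Real.convexOn_log_Gamma.deriv_le_slope (x := x) (y := x + 1)
    (Set.mem_Ioi.2 hx) (Set.mem_Ioi.2 (by linarith)) (by linarith)
    (by simpa [Function.comp_def] using diffAt_logGamma hx)
  simpa [Function.comp_def, slope_logGamma hx, digamma] using h

lemma log_le_digamma_add_one {x : ℝ} (hx : 0 < x) : Real.log x ≤ digamma (x + 1) := by
  have h := Real.convexOn_log_Gamma.slope_le_deriv (x := x) (y := x + 1)
    (Set.mem_Ioi.2 hx) (Set.mem_Ioi.2 (by linarith)) (by linarith)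
    (by simpa [Function.comp_def] using diffAt_logGamma (by linarith : (0:ℝ) < x + 1))
  simpa [Function.comp_def, slope_logGamma hx, digamma] using h

lemma digamma_add_one {x : ℝ} (hx : 0 < x) : digamma (x + 1) = digamma x + 1 / x := by
  have key : (fun y => Real.log (Real.Gamma (y + 1)))
      =ᶠ[nhds x] (fun y => Real.log (Real.Gamma y) + Real.log y) := by
    filter_upwards [eventually_gt_nhds hx] with y hy
    rw [Real.Gamma_add_one (ne_of_gt hy),
      Real.log_mul (ne_of_gt hy) (ne_of_gt (Real.Gamma_pos_of_pos hy))]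
    ring
  have h1 : deriv (fun y => Real.log (Real.Gamma (y + 1))) x = digamma (x + 1) := by
    simpa [digamma] using deriv_comp_add_const (fun y => Real.log (Real.Gamma y)) 1 x
  have h2 : deriv (fun y => Real.log (Real.Gamma y) + Real.log y) x
      = digamma x + 1 / x := by
    rw [deriv_fun_add (diffAt_logGamma hx) (Real.differentiableAt_log (ne_of_gt hx))]
    rw [Real.deriv_log]
    simp [digamma, one_div]
  rw [← h1, key.deriv_eq, h2]

lemma one_div_le_log_sub {x : ℝ} (hx : 1 < x) : 1 / x ≤ Real.log x - Real.log (x - 1) := by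
  have h0 : (0:ℝ) < x - 1 := by linarith
  have h1 : (0:ℝ) < x := by linarith
  have := Real.log_le_sub_one_of_pos (show (0:ℝ) < (x-1)/x by positivity)
  rw [Real.log_div (ne_of_gt h0) (ne_of_gt h1)] at this
  have : (x - 1) / x - 1 = -(1/x) := by field_simp; ring
  nlinarith [Real.log_le_sub_one_of_pos (show (0:ℝ) < (x-1)/x by positivity),
    Real.log_div (ne_of_gt h0) (ne_of_gt h1)]

lemma onestep {N : ℕ} (hN : 0 < N) (β : Fin N → ℝ) (hβ : ∀ i, 0 < β i)
    (hs : 1 < ∑ i, β i) (j : Fin N) :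
    dirichletEntropy β - dirichletEntropy (Function.update β j (β j + 1))
      ≤ N * (Real.log (∑ i, β i) - Real.log ((∑ i, β i) - 1)) := by
  set s := ∑ i, β i with hs_def
  have hs0 : (0:ℝ) < s := by linarith
  have hβj := hβ j
  have hΓpos : ∀ i, 0 < Real.Gamma (β i) := fun i => Real.Gamma_pos_of_pos (hβ i)
  have hprodpos : 0 < ∏ i, Real.Gamma (β i) := Finset.prod_pos fun i _ => hΓpos i
  -- sum of updated
  have hsum_upd : ∑ i, Function.update β j (β j + 1) i = s + 1 := by
    rw [Finset.sum_update_of_mem (Finset.mem_univ j)]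
    rw [← Finset.add_sum_erase _ β (Finset.mem_univ j)] at hs_def
    have : Finset.univ \ {j} = Finset.univ.erase j := by
      ext i; simp [Finset.mem_erase, and_comm]
    rw [this]; linarith [hs_def]
  -- product of gammas of updated
  have hprod_upd : ∏ i, Real.Gamma (Function.update β j (β j + 1) i)
      = β j * ∏ i, Real.Gamma (β i) := by
    have h1 : ∏ i, Real.Gamma (Function.update β j (β j + 1) i)
        = ∏ i, Function.update (fun i => Real.Gamma (β i)) j (Real.Gamma (β j + 1)) i := by
      apply Finset.prod_congr rfl
      intro i _
      rcases eq_or_ne i j with rfl | h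
      · simp
      · simp [Function.update_of_ne h]
    rw [h1, Finset.prod_update_of_mem (Finset.mem_univ j),
      Real.Gamma_add_one (ne_of_gt hβj)]
    rw [← Finset.mul_prod_erase _ (fun i => Real.Gamma (β i)) (Finset.mem_univ j)]
    have : Finset.univ \ {j} = Finset.univ.erase j := by
      ext i; simp [Finset.mem_erase, and_comm]
    rw [this]; ring
  -- log of multiBeta of updated
  have hlogB : Real.log (multiBeta (Function.update β j (β j + 1)))
      = Real.log (multiBeta β) + Real.log (β j) - Real.log s := by
    unfold multiBeta
    rw [hsum_upd, hprod_upd, Real.Gamma_add_one (ne_of_gt hs0)]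
    have hΓs : 0 < Real.Gamma s := Real.Gamma_pos_of_pos hs0
    rw [Real.log_div (by positivity) (by positivity),
        Real.log_div (by positivity) (by positivity),
        Real.log_mul (by positivity) (by positivity),
        Real.log_mul (by positivity) (by positivity)]
    ring
  -- sum term of updated
  have hψj : β j * digamma (β j + 1) = β j * digamma (β j) + 1 := by
    rw [digamma_add_one hβj]; field_simp
  have hsum_term : ∑ i, (Function.update β j (β j + 1) i - 1)
        * digamma (Function.update β j (β j + 1) i)
      = (∑ i, (β i - 1) * digamma (β i)) + digamma (β j) + 1 := by
    have h1 : ∑ i, (Function.update β j (β j + 1) i - 1)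
          * digamma (Function.update β j (β j + 1) i)
        = ∑ i, Function.update (fun i => (β i - 1) * digamma (β i)) j
            ((β j + 1 - 1) * digamma (β j + 1)) i := by
      apply Finset.sum_congr rfl
      intro i _
      rcases eq_or_ne i j with rfl | h
      · simp
      · simp [Function.update_of_ne h]
    rw [h1, Finset.sum_update_of_mem (Finset.mem_univ j)]
    rw [← Finset.add_sum_erase _ (fun i => (β i - 1) * digamma (β i)) (Finset.mem_univ j)]
    have he : Finset.univ \ {j} = Finset.univ.erase j := by
      ext i; simp [Finset.mem_erase, and_comm]
    rw [he]
    have : (β j + 1 - 1) * digamma (β j + 1) = β j * digamma (β j) + 1 := by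
      rw [show β j + 1 - 1 = β j by ring]; exact hψj
    rw [this]; ring
  -- exact value of the difference
  have hψs1 : digamma (s + 1) = digamma s + 1 / s := digamma_add_one hs0
  have hdiff : dirichletEntropy β - dirichletEntropy (Function.update β j (β j + 1))
      = (Real.log s - digamma s) - (Real.log (β j) - digamma (β j)) + ((N:ℝ) - 1) / s := by
    unfold dirichletEntropy
    rw [hlogB, hsum_upd, hsum_term, hψs1]
    field_simp
    ring
  rw [hdiff]
  -- bounds
  have b1 : Real.log (s - 1) ≤ digamma s := by
    have := log_le_digamma_add_one (show (0:ℝ) < s - 1 by linarith)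
    rwa [show s - 1 + 1 = s by ring] at this
  have b2 : digamma (β j) ≤ Real.log (β j) := digamma_le_log hβj
  have b3 : 1 / s ≤ Real.log s - Real.log (s - 1) := one_div_le_log_sub hs
  have hN1 : (1:ℝ) ≤ (N:ℝ) := by exact_mod_cast hN
  have hdivle : ((N:ℝ) - 1) / s ≤ ((N:ℝ) - 1) * (Real.log s - Real.log (s - 1)) := by
    rw [div_eq_mul_one_div]
    exact mul_le_mul_of_nonneg_left b3 (by linarith)
  nlinarith [hdivle]

lemma main_aux {N : ℕ} (hN : 0 < N) (α : Fin N → ℝ) (hα : ∀ i, 0 < α i)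
    (hαsum : 2 ≤ ∑ i, α i) :
    ∀ n : ℕ, ∀ y : Fin N → ℕ, ∑ i, y i = n →
    dirichletEntropy α - dirichletEntropy (fun i => α i + y i)
      ≤ N * (Real.log ((∑ i, α i) + n - 1) - Real.log ((∑ i, α i) - 1)) := by
  intro n
  induction n with
  | zero =>
    intro y hy
    have hy0 : ∀ i, y i = 0 := by
      intro i
      exact (Finset.sum_eq_zero_iff.1 hy) i (Finset.mem_univ i)
    have : (fun i => α i + (y i : ℝ)) = α := by
      funext i; rw [hy0 i]; simp
    rw [this]
    simp
  | succ n ih =>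
    intro y hy
    -- find j with y j ≠ 0
    have : ∃ j, y j ≠ 0 := by
      by_contra h
      push_neg at h
      simp [h] at hy
    obtain ⟨j, hj⟩ := this
    have hj1 : 1 ≤ y j := Nat.one_le_iff_ne_zero.2 hj
    set y' : Fin N → ℕ := Function.update y j (y j - 1) with hy'_def
    have hy'sum : ∑ i, y' i = n := by
      rw [hy'_def, Finset.sum_update_of_mem (Finset.mem_univ j)]
      rw [← Finset.add_sum_erase _ y (Finset.mem_univ j)] at hy
      have he : Finset.univ \ {j} = Finset.univ.erase j := by
        ext i; simp [Finset.mem_erase, and_comm]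
      rw [he]
      omega
    set β : Fin N → ℝ := fun i => α i + (y' i : ℝ) with hβ_def
    have hβpos : ∀ i, 0 < β i := fun i => by
      have := hα i; have : (0:ℝ) ≤ (y' i : ℝ) := Nat.cast_nonneg _
      simp only [hβ_def]; positivity
    have hβsum : ∑ i, β i = (∑ i, α i) + n := by
      simp only [hβ_def]
      rw [Finset.sum_add_distrib]
      congr 1
      rw [← Nat.cast_sum]
      exact_mod_cast congrArg (Nat.cast : ℕ → ℝ) hy'sum
    have hβsum1 : 1 < ∑ i, β i := by
      rw [hβsum]
      have : (0:ℝ) ≤ (n:ℝ) := Nat.cast_nonneg n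
      linarith
    have hupd : (fun i => α i + (y i : ℝ)) = Function.update β j (β j + 1) := by
      funext i
      rcases eq_or_ne i j with rfl | h
      · rw [Function.update_self]
        simp only [hβ_def, hy'_def, Function.update_self]
        have : ((y i - 1 : ℕ) : ℝ) = (y i : ℝ) - 1 := by
          rw [Nat.cast_sub hj1]; simp
        rw [this]; ring
      · rw [Function.update_of_ne h]
        simp only [hβ_def, hy'_def, Function.update_of_ne h]
    have step := onestep hN β hβpos hβsum1 j
    have ihy := ih y' hy'sum
    rw [hupd]
    rw [hβsum] at step
    have hcast : ((n + 1 : ℕ) : ℝ) = (n : ℝ) + 1 := by push_cast; ring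
    rw [hcast]
    calc dirichletEntropy α - dirichletEntropy (Function.update β j (β j + 1))
        = (dirichletEntropy α - dirichletEntropy β)
          + (dirichletEntropy β - dirichletEntropy (Function.update β j (β j + 1))) := by ring
      _ ≤ N * (Real.log ((∑ i, α i) + n - 1) - Real.log ((∑ i, α i) - 1))
          + N * (Real.log ((∑ i, α i) + n) - Real.log ((∑ i, α i) + n - 1)) := by
          exact add_le_add ihy step
      _ = N * (Real.log ((∑ i, α i) + ((n:ℝ) + 1) - 1) - Real.log ((∑ i, α i) - 1)) := by
          rw [show (∑ i, α i) + ((n:ℝ) + 1) - 1 = (∑ i, α i) + n by ring]; ring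

/-- If `p ~ Dirichlet(α)` with `ᾱ ≥ 2` and, conditioned on `p`, `Y ~ Multinomial(n, p)`,
then for any realization `y` of `Y` (whose posterior is `Dirichlet(α + y)`),
`h(p) − h(p | Y = y) ≤ N·log(1 + n)`. -/
theorem dirichlet_multinomial_information_gain_bound (N : ℕ) (hN : 0 < N)
    (α : Fin N → ℝ) (hα : ∀ i, 0 < α i) (hαsum : 2 ≤ ∑ i, α i)
    (n : ℕ) (y : Fin N → ℕ) (hy : ∑ i, y i = n) :
    dirichletEntropy α - dirichletEntropy (fun i => α i + y i)
      ≤ N * Real.log (1 + n) := by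
  have h := main_aux hN α hα hαsum n y hy
  refine h.trans ?_
  apply mul_le_mul_of_nonneg_left _ (Nat.cast_nonneg N)
  set s := ∑ i, α i
  have hs1 : (1:ℝ) ≤ s - 1 := by simp only [s]; linarith
  have hn0 : (0:ℝ) ≤ (n:ℝ) := Nat.cast_nonneg n
  have h1n : (0:ℝ) < 1 + n := by linarith
  have key : s + n - 1 ≤ (1 + n) * (s - 1) := by nlinarith
  have h2 : Real.log (s + n - 1) ≤ Real.log ((1 + n) * (s - 1)) :=
    Real.log_le_log (by linarith) key
  rw [Real.log_mul (ne_of_gt h1n) (by linarith)] at h2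
  linarith
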